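/- Let G=(V,E) be a general dissimilarity graph, and suppose there is a weight function w' on E with w'(e)≥w(e) for all e∈E and w'(e)=w(e) for all e∉S, such that (G,w') is a general metric graph. Then S is a non-top cover of all unbalanced cycles of G, i.e., S contains a non-top edge of every unbalanced cycle. Combined with sufficiency, weights of edges in S⊆E can be increased to convert G into a general metric graph if and only if S is a non-top cover of all unbalanced cycles of G. -/

import Mathlib

open SimpleGraph

noncomputable section

variable {V : Type*}

/-- The length of a walk: the sum of the weights of its edges. -/
def wlen {G : SimpleGraph V} (w : Sym2 V → ℝ) {u v : V} (p : G.Walk u v) : ℝ :=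
  (p.edges.map w).sum

/-- The shortest-path distance between two vertices: the minimum length of a path. -/
def spDist (G : SimpleGraph V) (w : Sym2 V → ℝ) (u v : V) : ℝ :=
  sInf {x : ℝ | ∃ p : G.Walk u v, p.IsPath ∧ wlen w p = x}

/-- `(G, w)` is a general metric graph: the weight of every edge equals the
shortest-path distance between its endpoints. -/
def IsMetricGraph (G : SimpleGraph V) (w : Sym2 V → ℝ) : Prop :=
  ∀ u v : V, G.Adj u v → w s(u, v) = spDist G w u v

/-- `e` is a top edge of the closed walk `p`: it lies on `p` and its weight strictly
exceeds the sum of the weights of all the other edges of `p`. -/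
def IsTopEdge {G : SimpleGraph V} (w : Sym2 V → ℝ) {v : V} (p : G.Walk v v)
    (e : Sym2 V) : Prop :=
  e ∈ p.edges ∧ (p.edges.map w).sum - w e < w e

/-- A cycle is unbalanced if it has a top edge. -/
def IsUnbalanced {G : SimpleGraph V} (w : Sym2 V → ℝ) {v : V} (p : G.Walk v v) : Prop :=
  ∃ e, IsTopEdge w p e

/-- `S` is a regular cover of all unbalanced cycles of `G`:
it contains at least one edge of every unbalanced cycle. -/
def RegularCover (G : SimpleGraph V) (w : Sym2 V → ℝ) (S : Set (Sym2 V)) : Prop :=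
  ∀ (v : V) (p : G.Walk v v), p.IsCycle → IsUnbalanced w p → ∃ e ∈ p.edges, e ∈ S

/-- `S` is a non-top cover of all unbalanced cycles of `G`:
it contains at least one non-top edge of every unbalanced cycle. -/
def NonTopCover (G : SimpleGraph V) (w : Sym2 V → ℝ) (S : Set (Sym2 V)) : Prop :=
  ∀ (v : V) (p : G.Walk v v), p.IsCycle → IsUnbalanced w p →
    ∃ e ∈ p.edges, e ∈ S ∧ ¬ IsTopEdge w p e

/-!
In a metric graph no closed walk has a top edge: the top edge `s(a, b)` weighs `d(a, b)`, which
is at most the length of the rest of the walk. With nonnegative weights a closed walk has at most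
one top edge, so if `S` met an unbalanced cycle only in top edges, raising the weights on `S`
would raise only its top edge and keep it on top, contradicting metricity.

Conversely, give every edge of `S` a weight `B` bounding all original weights and replace each
weight by the shortest-path distance for these modified weights. A path beating `w(u, v)` avoids
`S`, so together with `s(u, v)` it would form an unbalanced cycle covered only by its top edge;
hence no edge weight decreases, those outside `S` are unchanged, and the distance closure of a
weighting is always metric.
-/

section Length

variable {G : SimpleGraph V} (w : Sym2 V → ℝ)

@[simp]
lemma wlen_nil {u : V} : wlen w (Walk.nil : G.Walk u u) = 0 := by
  simp [wlen]

@[simp]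
lemma wlen_cons {u x v : V} (h : G.Adj u x) (p : G.Walk x v) :
    wlen w (Walk.cons h p) = w s(u, x) + wlen w p := by
  simp [wlen]

@[simp]
lemma wlen_append {u v x : V} (p : G.Walk u v) (q : G.Walk v x) :
    wlen w (p.append q) = wlen w p + wlen w q := by
  simp [wlen]

@[simp]
lemma wlen_reverse {u v : V} (p : G.Walk u v) : wlen w p.reverse = wlen w p := by
  simp [wlen]

variable {w}

lemma wlen_congr {w' : Sym2 V → ℝ} {u v : V} {p : G.Walk u v}
    (h : ∀ e ∈ p.edges, w e = w' e) : wlen w p = wlen w' p :=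
  congrArg List.sum (List.map_congr_left h)

lemma wlen_nonneg (hw : ∀ e ∈ G.edgeSet, 0 ≤ w e) {u v : V} (p : G.Walk u v) :
    0 ≤ wlen w p :=
  List.sum_nonneg <| by
    simpa using fun e he => hw e (p.edges_subset_edgeSet he)

lemma le_wlen_of_mem_edges (hw : ∀ e ∈ G.edgeSet, 0 ≤ w e) {u v : V} {p : G.Walk u v}
    {e : Sym2 V} (he : e ∈ p.edges) : w e ≤ wlen w p :=
  List.single_le_sum (by simpa using fun f hf => hw f (p.edges_subset_edgeSet hf)) _
    (List.mem_map_of_mem he)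

lemma wlen_bypass_le [DecidableEq V] (hw : ∀ e ∈ G.edgeSet, 0 ≤ w e) {u v : V}
    (p : G.Walk u v) : wlen w p.bypass ≤ wlen w p :=
  (p.edges_bypass_sublist_edges.map w).sum_le_sum <| by
    simpa using fun e he => hw e (p.edges_subset_edgeSet he)

end Length

section Distance

variable {G : SimpleGraph V} {w : Sym2 V → ℝ}

lemma spDist_le_wlen (hw : ∀ e ∈ G.edgeSet, 0 ≤ w e) {u v : V} (p : G.Walk u v) :
    spDist G w u v ≤ wlen w p := by
  classical
  have hbdd : BddBelow {x : ℝ | ∃ p : G.Walk u v, p.IsPath ∧ wlen w p = x} :=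
    ⟨0, by rintro _ ⟨q, -, rfl⟩; exact wlen_nonneg hw q⟩
  exact (csInf_le hbdd ⟨p.bypass, p.bypass_isPath, rfl⟩).trans (wlen_bypass_le hw p)

lemma spDist_le_weight (hw : ∀ e ∈ G.edgeSet, 0 ≤ w e) {u v : V} (h : G.Adj u v) :
    spDist G w u v ≤ w s(u, v) := by
  simpa using spDist_le_wlen hw (Walk.cons h Walk.nil)

lemma le_spDist (hconn : G.Connected) {u v : V} {x : ℝ}
    (h : ∀ p : G.Walk u v, p.IsPath → x ≤ wlen w p) : x ≤ spDist G w u v := by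
  classical
  obtain ⟨p⟩ := hconn.preconnected u v
  exact le_csInf ⟨_, p.bypass, p.bypass_isPath, rfl⟩ (by rintro _ ⟨q, hq, rfl⟩; exact h q hq)

lemma spDist_comm (u v : V) : spDist G w u v = spDist G w v u := by
  have key : ∀ a b : V, {x : ℝ | ∃ p : G.Walk a b, p.IsPath ∧ wlen w p = x} ⊆
      {x : ℝ | ∃ p : G.Walk b a, p.IsPath ∧ wlen w p = x} := by
    rintro a b _ ⟨p, hp, rfl⟩
    exact ⟨p.reverse, hp.reverse, wlen_reverse w p⟩
  exact congrArg sInf ((key u v).antisymm (key v u))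

lemma spDist_triangle (hw : ∀ e ∈ G.edgeSet, 0 ≤ w e) (hconn : G.Connected) (u v x : V) :
    spDist G w u x ≤ spDist G w u v + spDist G w v x := by
  have h : spDist G w u x - spDist G w v x ≤ spDist G w u v :=
    le_spDist hconn fun p _ => sub_le_comm.1 <| le_spDist hconn fun q _ =>
      sub_le_iff_le_add'.2 (by simpa using spDist_le_wlen hw (p.append q))
  linarith

lemma spDist_le_wlen_of_forall_adj {w' : Sym2 V → ℝ} (hw : ∀ e ∈ G.edgeSet, 0 ≤ w e)
    (hconn : G.Connected) (hadj : ∀ a b : V, G.Adj a b → spDist G w a b ≤ w' s(a, b)) :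
    ∀ {u v : V} (p : G.Walk u v), spDist G w u v ≤ wlen w' p
  | _, _, .nil => by simpa using spDist_le_wlen hw (Walk.nil : G.Walk _ _)
  | u, _, .cons (v := x) h q => by
    rw [wlen_cons]
    exact (spDist_triangle hw hconn u x _).trans
      (add_le_add (hadj u x h) (spDist_le_wlen_of_forall_adj hw hconn hadj q))

lemma spDist_nonneg (hw : ∀ e ∈ G.edgeSet, 0 ≤ w e) (hconn : G.Connected) (u v : V) :
    0 ≤ spDist G w u v :=
  le_spDist hconn fun p _ => wlen_nonneg hw p

variable (G w) in
def metricClosure : Sym2 V → ℝ :=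
  Sym2.lift ⟨spDist G w, spDist_comm⟩

@[simp]
lemma metricClosure_mk (u v : V) : metricClosure G w s(u, v) = spDist G w u v := rfl

lemma isMetricGraph_metricClosure (hw : ∀ e ∈ G.edgeSet, 0 ≤ w e) (hconn : G.Connected) :
    IsMetricGraph G (metricClosure G w) := by
  have hw' : ∀ e ∈ G.edgeSet, 0 ≤ metricClosure G w e := by
    rintro ⟨u, v⟩ -
    exact spDist_nonneg hw hconn u v
  intro u v h
  refine le_antisymm (le_spDist hconn fun p _ => ?_) (spDist_le_weight hw' h)
  exact spDist_le_wlen_of_forall_adj hw hconn (fun a b _ => le_rfl) p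

end Distance

section TopEdge

variable {G : SimpleGraph V} {w : Sym2 V → ℝ}

lemma SimpleGraph.Walk.exists_eq_append_cons_of_mem_edges :
    ∀ {u v : V} {p : G.Walk u v} {e : Sym2 V}, e ∈ p.edges →
      ∃ (a b : V) (h : G.Adj a b) (q : G.Walk u a) (r : G.Walk b v),
        e = s(a, b) ∧ p = q.append (Walk.cons h r)
  | _, _, .nil, _, he => by simp at he
  | u, _, .cons (v := x) h p, e, he => by
    rcases List.mem_cons.1 he with rfl | he
    · exact ⟨u, x, h, .nil, p, rfl, rfl⟩
    · obtain ⟨a, b, h', q, r, rfl, rfl⟩ := Walk.exists_eq_append_cons_of_mem_edges he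
      exact ⟨a, b, h', .cons h q, r, rfl, rfl⟩

lemma SimpleGraph.Walk.exists_perm_edges_of_mem_edges {v : V} {p : G.Walk v v} {e : Sym2 V}
    (he : e ∈ p.edges) :
    ∃ (a b : V) (r : G.Walk b a), e = s(a, b) ∧ p.edges.Perm (e :: r.edges) := by
  obtain ⟨a, b, h, q, r, rfl, rfl⟩ := Walk.exists_eq_append_cons_of_mem_edges he
  refine ⟨a, b, r.append q, rfl, ?_⟩
  simpa using List.perm_middle.trans (List.perm_append_comm.cons _)

lemma isTopEdge_iff [DecidableEq V] {v : V} {p : G.Walk v v} {e : Sym2 V} :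
    IsTopEdge w p e ↔ e ∈ p.edges ∧ ((p.edges.erase e).map w).sum < w e := by
  refine ⟨fun h => ⟨h.1, ?_⟩, fun h => ⟨h.1, ?_⟩⟩ <;>
  · have := List.sum_map_erase w h.1
    linarith [h.2]

lemma IsTopEdge.eq (hw : ∀ e ∈ G.edgeSet, 0 ≤ w e) {v : V} {p : G.Walk v v} {e f : Sym2 V}
    (he : IsTopEdge w p e) (hf : IsTopEdge w p f) : e = f := by
  classical
  have lt_of_top : ∀ {e f}, IsTopEdge w p e → IsTopEdge w p f → e ≠ f → w f < w e := by
    intro e f he hf hne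
    rw [isTopEdge_iff] at he
    refine lt_of_le_of_lt (List.single_le_sum ?_ _ (List.mem_map_of_mem
      ((List.mem_erase_of_ne hne.symm).2 hf.1))) he.2
    simpa using fun g hg => hw g (p.edges_subset_edgeSet (List.mem_of_mem_erase hg))
  by_contra hne
  exact (lt_of_top he hf hne).not_gt (lt_of_top hf he (Ne.symm hne))

lemma IsTopEdge.of_le {w' : Sym2 V → ℝ} {v : V} {p : G.Walk v v} (hp : p.IsTrail)
    {e : Sym2 V} (he : IsTopEdge w p e) (hle : w e ≤ w' e)
    (heq : ∀ f ∈ p.edges, f ≠ e → w' f = w f) : IsTopEdge w' p e := by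
  classical
  rw [isTopEdge_iff] at he ⊢
  refine ⟨he.1, lt_of_le_of_lt (le_of_eq ?_) (he.2.trans_le hle)⟩
  refine congrArg List.sum (List.map_congr_left fun f hf => ?_)
  obtain ⟨hne, hf⟩ := (hp.edges_nodup.mem_erase_iff).1 hf
  exact heq f hf hne

lemma IsMetricGraph.not_isTopEdge (hmet : IsMetricGraph G w) (hw : ∀ e ∈ G.edgeSet, 0 ≤ w e)
    {v : V} (p : G.Walk v v) (e : Sym2 V) : ¬ IsTopEdge w p e := by
  rintro ⟨he, htop⟩
  obtain ⟨a, b, r, rfl, hperm⟩ := Walk.exists_perm_edges_of_mem_edges he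
  have hsum : (p.edges.map w).sum = w s(a, b) + wlen w r := by
    simp [(hperm.map w).sum_eq, wlen]
  have hab : w s(a, b) ≤ wlen w r := by
    rw [hmet a b (p.adj_of_mem_edges he), ← wlen_reverse w r]
    exact spDist_le_wlen hw r.reverse
  linarith

end TopEdge

section Cover

variable {G : SimpleGraph V} {w : Sym2 V → ℝ} {S : Set (Sym2 V)}

lemma nonTopCover_of_isMetricGraph {w' : Sym2 V → ℝ} (hw : ∀ e ∈ G.edgeSet, 0 ≤ w e)
    (hle : ∀ e ∈ G.edgeSet, w e ≤ w' e) (heq : ∀ e ∈ G.edgeSet, e ∉ S → w' e = w e)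
    (hmet : IsMetricGraph G w') : NonTopCover G w S := by
  rintro v p hp ⟨e, he⟩
  by_contra! hS
  have hw' : ∀ e ∈ G.edgeSet, 0 ≤ w' e := fun e h => (hw e h).trans (hle e h)
  refine hmet.not_isTopEdge hw' p e (he.of_le hp.isTrail (hle e ?_) fun f hf hne => ?_)
  · exact p.edges_subset_edgeSet he.1
  · exact heq f (p.edges_subset_edgeSet hf) fun hfS => hne (hS f hf hfS |>.eq hw he)

lemma le_spDist_of_nonTopCover (hw : ∀ e ∈ G.edgeSet, 0 ≤ w e) (hconn : G.Connected)
    (hcover : NonTopCover G w S) {B : ℝ} (hB : ∀ e ∈ G.edgeSet, w e ≤ B) {w' : Sym2 V → ℝ}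
    (hw' : ∀ e ∈ G.edgeSet, 0 ≤ w' e) (hS : ∀ e ∈ S, B ≤ w' e) (hSc : ∀ e ∉ S, w' e = w e)
    ⦃u v : V⦄ (huv : G.Adj u v) : w s(u, v) ≤ spDist G w' u v := by
  refine le_spDist hconn fun Q hQ => ?_
  by_cases hQS : ∃ f ∈ Q.edges, f ∈ S
  · obtain ⟨f, hf, hfS⟩ := hQS
    calc w s(u, v) ≤ B := hB _ huv
      _ ≤ w' f := hS f hfS
      _ ≤ wlen w' Q := le_wlen_of_mem_edges hw' hf
  push Not at hQS
  rw [wlen_congr fun f hf => hSc f (hQS f hf)]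
  by_cases huvQ : s(u, v) ∈ Q.edges
  · exact le_wlen_of_mem_edges hw huvQ
  by_contra! hlt
  let c : G.Walk v v := .cons huv.symm Q
  have hc : c.IsCycle := (Walk.cons_isCycle_iff Q huv.symm).2 ⟨hQ, by rwa [Sym2.eq_swap]⟩
  have htop : IsTopEdge w c s(u, v) := by
    refine ⟨by simp [c], ?_⟩
    simp only [c, Walk.edges_cons, List.map_cons, List.sum_cons, Sym2.eq_swap]
    unfold wlen at hlt
    linarith
  obtain ⟨f, hfc, hfS, hfnt⟩ := hcover v c hc ⟨_, htop⟩
  rw [Walk.edges_cons, List.mem_cons] at hfc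
  rcases hfc with rfl | hf
  · exact hfnt (by rwa [Sym2.eq_swap])
  · exact hQS f hf hfS

lemma exists_isMetricGraph_of_nonTopCover [Finite V] (hw : ∀ e ∈ G.edgeSet, 0 ≤ w e)
    (hconn : G.Connected) (hcover : NonTopCover G w S) :
    ∃ w' : Sym2 V → ℝ, (∀ e ∈ G.edgeSet, w e ≤ w' e) ∧
      (∀ e ∈ G.edgeSet, e ∉ S → w' e = w e) ∧ IsMetricGraph G w' := by
  classical
  obtain ⟨B, hB⟩ := (G.edgeSet.toFinite.image w).bddAbove
  replace hB : ∀ e ∈ G.edgeSet, w e ≤ B := fun e he => hB ⟨e, he, rfl⟩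
  set wS := S.piecewise (fun _ => B) w
  have hwS : ∀ e ∈ G.edgeSet, 0 ≤ wS e := by
    intro e he
    by_cases heS : e ∈ S
    · simpa [wS, heS] using (hw e he).trans (hB e he)
    · simpa [wS, heS] using hw e he
  have key := le_spDist_of_nonTopCover hw hconn hcover hB hwS
    (fun e he => by simp [wS, he]) (fun e he => by simp [wS, he])
  refine ⟨metricClosure G wS, ?_, ?_, isMetricGraph_metricClosure hwS hconn⟩
  · rintro ⟨u, v⟩ he
    exact key he
  · rintro ⟨u, v⟩ he heS
    refine le_antisymm ?_ (key he)
    simpa [wS, heS] using spDist_le_weight hwS he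

end Cover

theorem stmt5_general [Fintype V] (G : SimpleGraph V) (hconn : G.Connected)
    (w : Sym2 V → ℝ) (hw : ∀ e ∈ G.edgeSet, 0 < w e)
    (S : Set (Sym2 V)) :
    (∃ w' : Sym2 V → ℝ,
      (∀ e ∈ G.edgeSet, w e ≤ w' e) ∧
      (∀ e ∈ G.edgeSet, e ∉ S → w' e = w e) ∧
      IsMetricGraph G w') ↔ NonTopCover G w S := by
  have hw₀ : ∀ e ∈ G.edgeSet, 0 ≤ w e := fun e he => (hw e he).le
  exact ⟨fun ⟨_, hle, heq, hmet⟩ => nonTopCover_of_isMetricGraph hw₀ hle heq hmet,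
    exists_isMetricGraph_of_nonTopCover hw₀ hconn⟩

/-- Weights of edges in `S ⊆ E` can be increased to convert `G` into a general
metric graph if and only if `S` is a non-top cover of all unbalanced cycles of `G`. -/
theorem stmt5 [Fintype V] (G : SimpleGraph V) (hconn : G.Connected)
    (w : Sym2 V → ℝ) (hw : ∀ e ∈ G.edgeSet, 0 < w e)
    (S : Set (Sym2 V)) (hSE : S ⊆ G.edgeSet) :
    (∃ w' : Sym2 V → ℝ,
      (∀ e ∈ G.edgeSet, w e ≤ w' e) ∧
      (∀ e ∈ G.edgeSet, e ∉ S → w' e = w e) ∧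
      IsMetricGraph G w') ↔ NonTopCover G w S :=
  stmt5_general G hconn w hw S
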